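/- Let f : ℝ → ℝ be an SD map. Then f is the identity map: f(x) = x for all x in ℝ. No continuity assumption is required. -/

import Mathlib

/-- A function `f : F → F` on a field `F` is an *SD map* if for all `x ≠ y` one has
`f x ≠ f y` and `f ((x+y)/(x-y)) = (f x + f y) / (f x - f y)`. -/
def IsSDMap {F : Type*} [Field F] (f : F → F) : Prop :=
  ∀ ⦃x y : F⦄, x ≠ y →
    f x ≠ f y ∧ f ((x + y) / (x - y)) = (f x + f y) / (f x - f y)

/-!
Pairing `x` with `0` and with `-x`, and rescaling a pair `(x, y)` to `(x z, y z)`, shows that an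
SD map fixes `0` and `1`, is odd and is multiplicative. Over an ordered field the relations at the
pairs `(2, 1)`, `(3, 2)`, `(5, 3)` force `f 2 = 2`, and the relation at `(n + 2, n)` then gives
`f n = n` for all `n`, so `f` fixes `ℚ`. Over `ℝ`, multiplicativity makes `f` positive on squares,
i.e. on `(0, ∞)`, and the relation at `(y, x)` with `0 < x < y` makes `f` increasing there;
an increasing map fixing `ℚ` is the identity.
-/

theorem self_ne_neg_of_ne_zero {R : Type*} [Ring R] [NoZeroDivisors R] [NeZero (2 : R)] {x : R}
    (hx : x ≠ 0) : x ≠ -x := fun h =>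
  have h2x : (2 : R) * x = 0 := by
    rw [two_mul]
    nth_rw 2 [h]
    exact add_neg_cancel x
  hx <| (mul_eq_zero.mp h2x).resolve_left two_ne_zero

namespace IsSDMap

section Field

variable {F : Type*} [Field F] {f : F → F}

theorem apply_div_mul_sub (hf : IsSDMap f) {x y : F} (hxy : x ≠ y) :
    f ((x + y) / (x - y)) * (f x - f y) = f x + f y := by
  obtain ⟨hne, heq⟩ := hf hxy
  rw [heq, div_mul_cancel₀ _ (sub_ne_zero.mpr hne)]

variable [NeZero (2 : F)]

theorem map_one (hf : IsSDMap f) : f 1 = 1 := by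
  -- the pair `(x, 0)`: unless `f 1 = 1`, `f` is constant on `x ≠ 0`
  have hpair {x : F} (hx : x ≠ 0) : f x * (f 1 - 1) = f 0 * (f 1 + 1) := by
    have h := hf.apply_div_mul_sub hx
    rw [add_zero, sub_zero, div_self hx] at h
    linear_combination h
  by_contra h
  have hne : f 1 ≠ f (-1) := (hf (self_ne_neg_of_ne_zero one_ne_zero)).1
  exact hne <| mul_right_cancel₀ (sub_ne_zero.mpr h)
    ((hpair one_ne_zero).trans (hpair (neg_ne_zero.mpr one_ne_zero)).symm)

theorem map_zero (hf : IsSDMap f) : f 0 = 0 := by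
  have h := hf.apply_div_mul_sub one_ne_zero
  rw [add_zero, sub_zero, div_one, hf.map_one] at h
  exact (mul_eq_zero.mp (by linear_combination -h : (2 : F) * f 0 = 0)).resolve_left two_ne_zero

theorem map_ne_zero (hf : IsSDMap f) {x : F} (hx : x ≠ 0) : f x ≠ 0 :=
  hf.map_zero ▸ (hf hx).1

theorem map_neg (hf : IsSDMap f) (x : F) : f (-x) = -f x := by
  rcases eq_or_ne x 0 with rfl | hx
  · simp [hf.map_zero]
  have h := hf.apply_div_mul_sub (self_ne_neg_of_ne_zero hx)
  rw [add_neg_cancel, zero_div, hf.map_zero, zero_mul] at h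
  linear_combination -h

theorem mul_apply_mul_eq (hf : IsSDMap f) {x y z : F} (hxy : x ≠ y) (hz : z ≠ 0) :
    f y * f (x * z) = f x * f (y * z) := by
  have hxyz : x * z ≠ y * z := fun h => hxy (mul_right_cancel₀ hz h)
  obtain ⟨hne, heq⟩ := hf hxy
  obtain ⟨hne', heq'⟩ := hf hxyz
  have harg : (x * z + y * z) / (x * z - y * z) = (x + y) / (x - y) := by
    rw [← add_mul, ← sub_mul, mul_div_mul_right _ _ hz]
  rw [harg, heq, div_eq_div_iff (sub_ne_zero.mpr hne) (sub_ne_zero.mpr hne')] at heq'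
  exact mul_left_cancel₀ two_ne_zero (by linear_combination heq')

theorem map_mul (hf : IsSDMap f) (x z : F) : f (x * z) = f x * f z := by
  rcases eq_or_ne z 0 with rfl | hz
  · simp [hf.map_zero]
  rcases eq_or_ne x 1 with rfl | hx
  · simp [hf.map_one]
  simpa [hf.map_one] using hf.mul_apply_mul_eq hx hz

end Field

section OrderedField

variable {F : Type*} [Field F] [LinearOrder F] [IsStrictOrderedRing F] {f : F → F}

theorem map_two (hf : IsSDMap f) : f 2 = 2 := by
  have h3 := hf.apply_div_mul_sub (show (2 : F) ≠ 1 by norm_num)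
  have h5 := hf.apply_div_mul_sub (show (3 : F) ≠ 2 by norm_num)
  have h4 := hf.apply_div_mul_sub (show (5 : F) ≠ 3 by norm_num)
  have h22 := hf.map_mul 2 2
  norm_num [hf.map_one] at h3 h5 h4 h22
  rw [h22] at h4
  -- eliminate `f 3` and `f 5` from the three relations
  have hpoly : f 2 * (f 2 - 2) * (f 2 + 1) * (f 2 ^ 2 + 1) = 0 := by grind
  have h0 : f 2 ≠ 0 := hf.map_ne_zero two_ne_zero
  have h1 : f 2 + 1 ≠ 0 := by
    rw [← sub_neg_eq_add, sub_ne_zero, ← hf.map_one, ← hf.map_neg]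
    exact (hf (by norm_num)).1
  have hsq : f 2 ^ 2 + 1 ≠ 0 := by positivity
  simpa [h0, h1, hsq, sub_eq_zero] using hpoly

theorem map_natCast (hf : IsSDMap f) (n : ℕ) : f n = n := by
  induction n using Nat.twoStepInduction with
  | zero => simpa using hf.map_zero
  | one => simpa using hf.map_one
  | more n hn hn1 =>
    rcases eq_or_ne n 0 with rfl | hn0
    · simpa using hf.map_two
    have h := hf.apply_div_mul_sub (show ((n + 2 : ℕ) : F) ≠ n by norm_num)
    have harg : (((n + 2 : ℕ) : F) + n) / ((n + 2 : ℕ) - n) = (n + 1 : ℕ) := by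
      push_cast; field_simp; ring
    rw [harg, hn, hn1] at h
    have hmul : (n : F) * f (n + 2 : ℕ) = n * (n + 2 : ℕ) := by
      push_cast at h ⊢
      linear_combination h
    exact mul_left_cancel₀ (Nat.cast_ne_zero.mpr hn0) hmul

theorem map_intCast (hf : IsSDMap f) (n : ℤ) : f n = n := by
  obtain ⟨n, rfl | rfl⟩ := Int.eq_nat_or_neg n
  · exact_mod_cast hf.map_natCast n
  · push_cast
    rw [hf.map_neg, hf.map_natCast]

theorem map_ratCast (hf : IsSDMap f) (q : ℚ) : f q = q := by
  have h := hf.map_mul q.den q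
  rw [← Rat.cast_natCast, ← Rat.cast_mul, Rat.den_mul_eq_num, Rat.cast_intCast, hf.map_intCast,
    Rat.cast_natCast, hf.map_natCast] at h
  calc f q = q.num / q.den := by rw [h, mul_div_cancel_left₀ _ (Nat.cast_ne_zero.mpr q.den_nz)]
    _ = q := (Rat.cast_def q).symm

end OrderedField

section Real

variable {f : ℝ → ℝ}

theorem apply_pos_of_pos (hf : IsSDMap f) {x : ℝ} (hx : 0 < x) : 0 < f x := by
  rw [← Real.mul_self_sqrt hx.le, hf.map_mul]
  exact mul_self_pos.mpr (hf.map_ne_zero (Real.sqrt_pos.mpr hx).ne')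

theorem strictMonoOn_Ioi (hf : IsSDMap f) : StrictMonoOn f (Set.Ioi 0) := by
  intro x (hx : 0 < x) y (hy : 0 < y) hxy
  have h := hf.apply_div_mul_sub hxy.ne'
  have harg : 0 < (y + x) / (y - x) := div_pos (by linarith) (by linarith)
  have hsum : 0 < f y + f x := add_pos (hf.apply_pos_of_pos hy) (hf.apply_pos_of_pos hx)
  rw [← h] at hsum
  linarith [pos_of_mul_pos_right hsum (hf.apply_pos_of_pos harg).le]

theorem apply_eq_self_of_pos (hf : IsSDMap f) {x : ℝ} (hx : 0 < x) : f x = x := by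
  have hfx := hf.apply_pos_of_pos hx
  rcases lt_trichotomy (f x) x with h | h | h
  · obtain ⟨q, hfq, hqx⟩ := exists_rat_btwn h
    have hlt := hf.strictMonoOn_Ioi (hfx.trans hfq) hx hqx
    rw [hf.map_ratCast] at hlt
    linarith
  · exact h
  · obtain ⟨q, hxq, hqf⟩ := exists_rat_btwn h
    have hlt := hf.strictMonoOn_Ioi hx (hx.trans hxq) hxq
    rw [hf.map_ratCast] at hlt
    linarith

end Real

end IsSDMap

theorem sd_map_real_eq_id (f : ℝ → ℝ) (hf : IsSDMap f) : ∀ x : ℝ, f x = x := by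
  intro x
  rcases lt_trichotomy x 0 with hx | rfl | hx
  · rw [← neg_neg x, hf.map_neg, hf.apply_eq_self_of_pos (neg_pos.mpr hx)]
  · exact hf.map_zero
  · exact hf.apply_eq_self_of_pos hx
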